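/- arXiv:2510.10130 — 11 statements merged into one kernel-verified Lean document; each statement's English description precedes it below -/
import Mathlib

section
/- For every u = (u¹, u², u³) ∈ ℝ³, the matrix–vector product P(u)·∇H(u) equals the right-hand side of the Stokes system, i.e. P(u)·∇H(u) = ((l₂−l₃)u²u³ + b₂u³ − b₃u², (l₃−l₁)u³u¹ + b₃u¹ − b₁u³, (l₁−l₂)u¹u² + b₁u² − b₂u¹). In other words, the Stokes system admits the Hamilton–Poisson realization (ℝ³, P, H). -/
/-- The Stokes system admits the Hamilton–Poisson realization (ℝ³, P, H):
for every `u ∈ ℝ³`, `P(u) ⬝ ∇H(u)` equals the right-hand side of the Stokes system. -/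
theorem stmt_0 (l₁ l₂ l₃ b₁ b₂ b₃ : ℝ) (u : Fin 3 → ℝ) :
    (Matrix.of ![![0, u 2, -u 1], ![-u 2, 0, u 0], ![u 1, -u 0, 0]]).mulVec
      ![l₁ * u 0 + b₁, l₂ * u 1 + b₂, l₃ * u 2 + b₃] =
    ![(l₂ - l₃) * u 1 * u 2 + b₂ * u 2 - b₃ * u 1,
      (l₃ - l₁) * u 2 * u 0 + b₃ * u 0 - b₁ * u 2,
      (l₁ - l₂) * u 0 * u 1 + b₁ * u 1 - b₂ * u 0] := by
  funext i
  fin_cases i <;>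
    simp [Matrix.mulVec, dotProduct, Fin.sum_univ_succ] <;> ring
end

section
/- The set of equilibrium states of the type-2 fractional Stokes system, i.e. the set of (u¹, u², u³) ∈ ℝ³ satisfying (l₂−l₃)u²u³ + b₂u³ = 0, (l₃−l₁)u³u¹ = 0 and (l₁−l₂)u¹u² − b₂u¹ = 0, is exactly the union of the three lines {(m, b₂/(l₁−l₂), 0) : m ∈ ℝ} ∪ {(0, m, 0) : m ∈ ℝ} ∪ {(0, b₂/(l₃−l₂), m) : m ∈ ℝ}. -/
/-- Equilibrium states of the type-2 fractional Stokes system. -/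
theorem stmt_3 (l₁ l₂ l₃ b₂ : ℝ) (h₁₂ : l₁ ≠ l₂) (h₂₃ : l₂ ≠ l₃) (h₃₁ : l₃ ≠ l₁)
    (hb₂ : b₂ ≠ 0) :
    {u : ℝ × ℝ × ℝ |
        (l₂ - l₃) * u.2.1 * u.2.2 + b₂ * u.2.2 = 0 ∧
        (l₃ - l₁) * u.2.2 * u.1 = 0 ∧
        (l₁ - l₂) * u.1 * u.2.1 - b₂ * u.1 = 0} =
    {u : ℝ × ℝ × ℝ | ∃ m : ℝ, u = (m, b₂ / (l₁ - l₂), 0)} ∪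
      {u : ℝ × ℝ × ℝ | ∃ m : ℝ, u = (0, m, 0)} ∪
      {u : ℝ × ℝ × ℝ | ∃ m : ℝ, u = (0, b₂ / (l₃ - l₂), m)} := by
  have h12 : l₁ - l₂ ≠ 0 := sub_ne_zero.mpr h₁₂
  have h32 : l₃ - l₂ ≠ 0 := sub_ne_zero.mpr (Ne.symm h₂₃)
  have h31 : l₃ - l₁ ≠ 0 := sub_ne_zero.mpr h₃₁
  ext ⟨x, y, z⟩
  simp only [Set.mem_setOf_eq, Set.mem_union, Prod.mk.injEq]
  constructor
  · rintro ⟨e1, e2, e3⟩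
    by_cases hx : x = 0
    · by_cases hz : z = 0
      · exact Or.inl (Or.inr ⟨y, hx, rfl, hz⟩)
      · refine Or.inr ⟨z, hx, ?_, rfl⟩
        have : (l₂ - l₃) * y + b₂ = 0 := by
          have := mul_right_cancel₀ hz (by linarith [e1] : ((l₂ - l₃) * y + b₂) * z = 0 * z)
          linarith [this]
        field_simp
        linarith
    · have hz : z = 0 := by
        rcases mul_eq_zero.mp e2 with h | h
        · exact (mul_eq_zero.mp h).elim (fun h => absurd h h31) id
        · exact absurd h hx
      refine Or.inl (Or.inl ⟨x, rfl, ?_, hz⟩)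
      have : (l₁ - l₂) * y - b₂ = 0 := by
        have := mul_right_cancel₀ hx (by linarith [e3] : ((l₁ - l₂) * y - b₂) * x = 0 * x)
        linarith [this]
      field_simp
      linarith
  · rintro ((⟨m, rfl, rfl, rfl⟩ | ⟨m, rfl, rfl, rfl⟩) | ⟨m, rfl, rfl, rfl⟩) <;>
      refine ⟨?_, ?_, ?_⟩ <;> field_simp <;> ring
end

section
/- The set of equilibrium states of the type-3 fractional Stokes system, i.e. the set of (u¹, u², u³) ∈ ℝ³ satisfying (l₂−l₃)u²u³ − b₃u² = 0, (l₃−l₁)u³u¹ + b₃u¹ − b₁u³ = 0 and (l₁−l₂)u¹u² + b₁u² = 0, is exactly {(b₁/(l₂−l₁), m, b₃/(l₂−l₃)) : m ∈ ℝ} ∪ {(b₁m/(b₃ + (l₃−l₁)m), 0, m) : m ∈ ℝ, b₃ + (l₃−l₁)m ≠ 0}. -/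
/-!
Factoring the equations as `u² ((l₂ - l₃) u³ - b₃) = 0`, `u¹ (b₃ + (l₃ - l₁) u³) = b₁ u³` and
`u² ((l₁ - l₂) u¹ + b₁) = 0` splits the equilibria by whether `u² = 0`. If `u² ≠ 0`, the outer
equations pin down `u¹` and `u³`, and the middle one then holds automatically. If `u² = 0`, only the
middle equation remains; its coefficient `b₃ + (l₃ - l₁) u³` cannot vanish, since then `b₁ u³ = 0`
forces `u³ = 0` and the coefficient would be `b₃ ≠ 0`, so it can be solved for `u¹`.
-/

section StokesEquilibrium

variable {K : Type*} [Field K] {l₁ l₂ l₃ b₁ b₃ : K}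

def IsStokesEquilibrium (l₁ l₂ l₃ b₁ b₃ : K) (u : K × K × K) : Prop :=
  (l₂ - l₃) * u.2.1 * u.2.2 - b₃ * u.2.1 = 0 ∧
  (l₃ - l₁) * u.2.2 * u.1 + b₃ * u.1 - b₁ * u.2.2 = 0 ∧
  (l₁ - l₂) * u.1 * u.2.1 + b₁ * u.2.1 = 0

theorem isStokesEquilibrium_div_sub (h₁₂ : l₁ ≠ l₂) (h₂₃ : l₂ ≠ l₃) (m : K) :
    IsStokesEquilibrium l₁ l₂ l₃ b₁ b₃ (b₁ / (l₂ - l₁), m, b₃ / (l₂ - l₃)) := by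
  have h₂₁ : l₂ - l₁ ≠ 0 := sub_ne_zero.mpr h₁₂.symm
  have h₂₃ : l₂ - l₃ ≠ 0 := sub_ne_zero.mpr h₂₃
  refine ⟨?_, ?_, ?_⟩ <;> field_simp <;> ring

theorem isStokesEquilibrium_snd_zero {m : K} (hm : b₃ + (l₃ - l₁) * m ≠ 0) :
    IsStokesEquilibrium l₁ l₂ l₃ b₁ b₃ (b₁ * m / (b₃ + (l₃ - l₁) * m), 0, m) := by
  refine ⟨by ring, ?_, by ring⟩
  field_simp
  ring

namespace IsStokesEquilibrium

variable {x y z : K}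

theorem eq_of_snd_ne_zero (h : IsStokesEquilibrium l₁ l₂ l₃ b₁ b₃ (x, y, z))
    (h₁₂ : l₁ ≠ l₂) (h₂₃ : l₂ ≠ l₃) (hy : y ≠ 0) :
    x = b₁ / (l₂ - l₁) ∧ z = b₃ / (l₂ - l₃) := by
  obtain ⟨e₁, -, e₃⟩ := h
  have hz : y * ((l₂ - l₃) * z - b₃) = 0 := by linear_combination e₁
  have hx : y * ((l₁ - l₂) * x + b₁) = 0 := by linear_combination e₃
  rw [mul_eq_zero, or_iff_right hy] at hx hz
  constructor
  · rw [eq_div_iff (sub_ne_zero.mpr h₁₂.symm)]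
    linear_combination -hx
  · rw [eq_div_iff (sub_ne_zero.mpr h₂₃)]
    linear_combination hz

theorem eq_of_snd_eq_zero (h : IsStokesEquilibrium l₁ l₂ l₃ b₁ b₃ (x, 0, z))
    (hb₁ : b₁ ≠ 0) (hb₃ : b₃ ≠ 0) :
    b₃ + (l₃ - l₁) * z ≠ 0 ∧ x = b₁ * z / (b₃ + (l₃ - l₁) * z) := by
  have hx : x * (b₃ + (l₃ - l₁) * z) = b₁ * z := by linear_combination h.2.1
  have hne : b₃ + (l₃ - l₁) * z ≠ 0 := by
    intro h₀
    have hz : z = 0 := by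
      simpa [hb₁, h₀] using hx.symm
    simp [hz, hb₃] at h₀
  exact ⟨hne, (eq_div_iff hne).mpr hx⟩

end IsStokesEquilibrium

end StokesEquilibrium

theorem stmt_4_general (l₁ l₂ l₃ b₁ b₃ : ℝ) (h₁₂ : l₁ ≠ l₂) (h₂₃ : l₂ ≠ l₃)
    (hb₁ : b₁ ≠ 0) (hb₃ : b₃ ≠ 0) :
    {u : ℝ × ℝ × ℝ |
        (l₂ - l₃) * u.2.1 * u.2.2 - b₃ * u.2.1 = 0 ∧
        (l₃ - l₁) * u.2.2 * u.1 + b₃ * u.1 - b₁ * u.2.2 = 0 ∧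
        (l₁ - l₂) * u.1 * u.2.1 + b₁ * u.2.1 = 0} =
    {u : ℝ × ℝ × ℝ | ∃ m : ℝ, u = (b₁ / (l₂ - l₁), m, b₃ / (l₂ - l₃))} ∪
      {u : ℝ × ℝ × ℝ | ∃ m : ℝ, b₃ + (l₃ - l₁) * m ≠ 0 ∧
        u = (b₁ * m / (b₃ + (l₃ - l₁) * m), 0, m)} := by
  change {u | IsStokesEquilibrium l₁ l₂ l₃ b₁ b₃ u} = _
  ext u
  constructor
  · obtain ⟨x, y, z⟩ := u
    intro h
    by_cases hy : y = 0
    · subst hy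
      obtain ⟨hne, rfl⟩ := IsStokesEquilibrium.eq_of_snd_eq_zero h hb₁ hb₃
      exact Or.inr ⟨z, hne, rfl⟩
    · obtain ⟨rfl, rfl⟩ := IsStokesEquilibrium.eq_of_snd_ne_zero h h₁₂ h₂₃ hy
      exact Or.inl ⟨y, rfl⟩
  · rintro (⟨m, rfl⟩ | ⟨m, hm, rfl⟩)
    exacts [isStokesEquilibrium_div_sub h₁₂ h₂₃ m, isStokesEquilibrium_snd_zero hm]

/-- Equilibrium states of the type-3 fractional Stokes system. -/
theorem stmt_4 (l₁ l₂ l₃ b₁ b₃ : ℝ) (h₁₂ : l₁ ≠ l₂) (h₂₃ : l₂ ≠ l₃) (h₃₁ : l₃ ≠ l₁)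
    (hb₁ : b₁ ≠ 0) (hb₃ : b₃ ≠ 0) :
    {u : ℝ × ℝ × ℝ |
        (l₂ - l₃) * u.2.1 * u.2.2 - b₃ * u.2.1 = 0 ∧
        (l₃ - l₁) * u.2.2 * u.1 + b₃ * u.1 - b₁ * u.2.2 = 0 ∧
        (l₁ - l₂) * u.1 * u.2.1 + b₁ * u.2.1 = 0} =
    {u : ℝ × ℝ × ℝ | ∃ m : ℝ, u = (b₁ / (l₂ - l₁), m, b₃ / (l₂ - l₃))} ∪
      {u : ℝ × ℝ × ℝ | ∃ m : ℝ, b₃ + (l₃ - l₁) * m ≠ 0 ∧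
        u = (b₁ * m / (b₃ + (l₃ - l₁) * m), 0, m)} :=
  stmt_4_general l₁ l₂ l₃ b₁ b₃ h₁₂ h₂₃ hb₁ hb₃
end

section
/- The set of equilibrium states of the type-4 fractional Stokes system, i.e. the set of (u¹, u², u³) ∈ ℝ³ satisfying (l₂−l₃)u²u³ + b₂u³ − b₃u² = 0, (l₃−l₁)u³u¹ + b₃u¹ − b₁u³ = 0 and (l₁−l₂)u¹u² + b₁u² − b₂u¹ = 0, is exactly {(b₁m/(b₃ + (l₃−l₁)m), b₂m/(b₃ + (l₃−l₂)m), m) : m ∈ ℝ, b₃ + (l₃−l₁)m ≠ 0 and b₃ + (l₃−l₂)m ≠ 0}. -/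
/-!
The first two equations are linear in `u²` and `u¹` respectively, with coefficients
`b₃ + (l₃ - l₂) u³` and `b₃ + (l₃ - l₁) u³`. On a solution such a coefficient cannot vanish, for
then `b₂ u³ = 0` (resp. `b₁ u³ = 0`), so `u³ = 0` and the coefficient is `b₃ ≠ 0`. Hence both
equations are solved uniquely in terms of `m = u³`, and the third equation holds automatically
for the resulting triple.
-/

theorem mul_eq_mul_iff_ne_zero_and_eq_div {K : Type*} [Field K] {a b c x z : K}
    (hb : b ≠ 0) (hc : c ≠ 0) :
    (c + a * z) * x = b * z ↔ c + a * z ≠ 0 ∧ x = b * z / (c + a * z) := by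
  constructor
  · intro h
    have hcoeff : c + a * z ≠ 0 := by
      intro hzero
      have hz : z = 0 := by simpa [hzero, hb] using h.symm
      simp [hz, hc] at hzero
    exact ⟨hcoeff, by rw [eq_div_iff hcoeff, mul_comm, h]⟩
  · rintro ⟨hcoeff, rfl⟩
    exact mul_div_cancel₀ _ hcoeff

theorem stmt_5_general (l₁ l₂ l₃ b₁ b₂ b₃ : ℝ)
    (hb₁ : b₁ ≠ 0) (hb₂ : b₂ ≠ 0) (hb₃ : b₃ ≠ 0) :
    {u : ℝ × ℝ × ℝ |
        (l₂ - l₃) * u.2.1 * u.2.2 + b₂ * u.2.2 - b₃ * u.2.1 = 0 ∧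
        (l₃ - l₁) * u.2.2 * u.1 + b₃ * u.1 - b₁ * u.2.2 = 0 ∧
        (l₁ - l₂) * u.1 * u.2.1 + b₁ * u.2.1 - b₂ * u.1 = 0} =
    {u : ℝ × ℝ × ℝ | ∃ m : ℝ, (b₃ + (l₃ - l₁) * m ≠ 0 ∧ b₃ + (l₃ - l₂) * m ≠ 0) ∧
        u = (b₁ * m / (b₃ + (l₃ - l₁) * m), b₂ * m / (b₃ + (l₃ - l₂) * m), m)} := by
  ext ⟨x, y, z⟩
  have first : (l₂ - l₃) * y * z + b₂ * z - b₃ * y = 0 ↔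
      b₃ + (l₃ - l₂) * z ≠ 0 ∧ y = b₂ * z / (b₃ + (l₃ - l₂) * z) := by
    rw [← mul_eq_mul_iff_ne_zero_and_eq_div hb₂ hb₃]
    constructor <;> intro h <;> linear_combination -h
  have second : (l₃ - l₁) * z * x + b₃ * x - b₁ * z = 0 ↔
      b₃ + (l₃ - l₁) * z ≠ 0 ∧ x = b₁ * z / (b₃ + (l₃ - l₁) * z) := by
    rw [← mul_eq_mul_iff_ne_zero_and_eq_div hb₁ hb₃]
    constructor <;> intro h <;> linear_combination h
  simp only [Set.mem_ofPred_eq, Prod.mk.injEq, first, second]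
  constructor
  · rintro ⟨⟨hB, hy⟩, ⟨hA, hx⟩, -⟩
    exact ⟨z, ⟨hA, hB⟩, hx, hy, rfl⟩
  · rintro ⟨_, ⟨hA, hB⟩, rfl, rfl, rfl⟩
    refine ⟨⟨hB, rfl⟩, ⟨hA, rfl⟩, ?_⟩
    -- `field_simp` looks for the denominators in its normal form `b₃ + z * (l₃ - lᵢ)`
    rw [mul_comm _ z] at hA hB
    field_simp
    ring

/-- Equilibrium states of the type-4 fractional Stokes system. -/
theorem stmt_5 (l₁ l₂ l₃ b₁ b₂ b₃ : ℝ) (h₁₂ : l₁ ≠ l₂) (h₂₃ : l₂ ≠ l₃) (h₃₁ : l₃ ≠ l₁)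
    (hb₁ : b₁ ≠ 0) (hb₂ : b₂ ≠ 0) (hb₃ : b₃ ≠ 0) :
    {u : ℝ × ℝ × ℝ |
        (l₂ - l₃) * u.2.1 * u.2.2 + b₂ * u.2.2 - b₃ * u.2.1 = 0 ∧
        (l₃ - l₁) * u.2.2 * u.1 + b₃ * u.1 - b₁ * u.2.2 = 0 ∧
        (l₁ - l₂) * u.1 * u.2.1 + b₁ * u.2.1 - b₂ * u.1 = 0} =
    {u : ℝ × ℝ × ℝ | ∃ m : ℝ, (b₃ + (l₃ - l₁) * m ≠ 0 ∧ b₃ + (l₃ - l₂) * m ≠ 0) ∧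
        u = (b₁ * m / (b₃ + (l₃ - l₁) * m), b₂ * m / (b₃ + (l₃ - l₂) * m), m)} :=
  stmt_5_general l₁ l₂ l₃ b₁ b₂ b₃ hb₁ hb₂ hb₃
end

section
/- If k₁ < 0 and k₂ < 0, then for every q ∈ (0,1) every eigenvalue λ ∈ ℂ of J₀₂ satisfies |arg λ| > qπ/2 (the Matignon条件 for asymptotic stability of the zero equilibrium state of the controlled type-2 fractional Stokes system of every order q ∈ (0,1)). -/
/-- If `k₁ < 0` and `k₂ < 0`, then for every `q ∈ (0,1)` every eigenvalue `λ` of `J₀₂`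
satisfies `|arg λ| > qπ/2`. -/
theorem stmt_8 (b₂ k₁ k₂ : ℝ) (hb₂ : b₂ ≠ 0) (hk₁ : k₁ < 0) (hk₂ : k₂ < 0) :
    let J : Matrix (Fin 3) (Fin 3) ℂ :=
      Matrix.of ![![(k₁ : ℂ), 0, (b₂ : ℂ)], ![0, (k₂ : ℂ), 0], ![-(b₂ : ℂ), 0, (k₁ : ℂ)]]
    ∀ q ∈ Set.Ioo (0 : ℝ) 1, ∀ z : ℂ, (J - z • 1).det = 0 →
      |z.arg| > q * Real.pi / 2 := by
  intro J q hq z hz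
  have hdet : ((k₂ : ℂ) - z) * (((k₁ : ℂ) - z) ^ 2 + (b₂ : ℂ) ^ 2) = 0 := by
    rw [← hz]
    simp only [J, Matrix.one_fin_three, Matrix.det_fin_three, Matrix.sub_apply,
      Matrix.smul_apply, Matrix.of_apply, Matrix.cons_val', Matrix.cons_val_zero,
      Matrix.cons_val_one, Matrix.head_cons, Matrix.empty_val', Matrix.cons_val_fin_one,
      Matrix.head_fin_const, Matrix.cons_val_two, Matrix.tail_cons, smul_eq_mul]
    ring
  have hre : z.re < 0 := by
    rcases mul_eq_zero.1 hdet with h | h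
    · have : z = (k₂ : ℂ) := by linear_combination -h
      rw [this]; simpa using hk₂
    · have h2 : ((k₁ : ℂ) - z) ^ 2 = -(b₂ : ℂ) ^ 2 := by linear_combination h
      set w : ℂ := (k₁ : ℂ) - z with hw
      have hre2 : w.re ^ 2 - w.im ^ 2 = -b₂ ^ 2 := by
        have := congrArg Complex.re h2
        simpa [pow_two, Complex.mul_re] using this
      have him2 : 2 * w.re * w.im = 0 := by
        have := congrArg Complex.im h2
        simp [pow_two, Complex.mul_im] at this
        linarith
      have hwre : w.re = 0 := by
        rcases mul_eq_zero.1 him2 with h' | h'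
        · rcases mul_eq_zero.1 h' with h'' | h''
          · norm_num at h''
          · exact h''
        · exfalso
          have : w.re ^ 2 = -b₂ ^ 2 := by rw [h'] at hre2; linarith [hre2]
          nlinarith [sq_nonneg w.re, pow_two_pos_of_ne_zero hb₂]
      have : z.re = k₁ := by
        have : w.re = k₁ - z.re := by simp [hw]
        linarith [hwre, this]
      linarith
  have harg : Real.pi / 2 < |z.arg| := by
    by_contra h
    push_neg at h
    exact absurd (Complex.abs_arg_le_pi_div_two_iff.1 h) (not_le.2 hre)
  have hπ : 0 < Real.pi := Real.pi_pos
  have : q * Real.pi / 2 < Real.pi / 2 := by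
    have := hq.2
    nlinarith
  linarith
end

section
/- Suppose k₁ > 0 and k₂ < 0, and set q₀ = (2/π)·arctan(|b₂|/k₁). Then q₀ ∈ (0,1), and for every q with 0 < q < q₀, every eigenvalue λ ∈ ℂ of J₀₂ satisfies |arg λ| > qπ/2; moreover for q = q₀ every eigenvalue λ of J₀₂ satisfies |arg λ| ≥ q₀π/2. -/
/-!
The characteristic polynomial of `J₀₂` factors as `(k₂ - z)((k₁ - z)² + b₂²)`, so the
eigenvalues are `k₂` and `k₁ ± b₂ i`. Since `k₂ < 0` its argument is `π`, while the pair
`k₁ ± b₂ i` lies in the right half-plane with `|arg| = arctan (|b₂| / k₁) = q₀π/2`. Hence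
every eigenvalue has `|arg λ| ≥ q₀π/2`, and `q₀ ∈ (0, 1)` because `arctan` maps `(0, ∞)`
into `(0, π/2)`.
-/

open Real

lemma Real.abs_arctan (x : ℝ) : |arctan x| = arctan |x| := by
  rcases le_or_gt 0 x with h | h
  · rw [abs_of_nonneg h, abs_of_nonneg (arctan_nonneg.2 h)]
  · rw [abs_of_neg h, abs_of_neg (arctan_lt_zero.2 h), arctan_neg]

lemma Complex.arg_eq_arctan_of_re_pos {z : ℂ} (hz : 0 < z.re) :
    arg z = Real.arctan (z.im / z.re) := by
  have hlt : |arg z| < π / 2 := abs_arg_lt_pi_div_two_iff.2 (Or.inl hz)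
  exact (arctan_eq_of_tan_eq (tan_arg z) (abs_lt.1 hlt)).symm

lemma Complex.abs_arg_eq_arctan_of_re_pos {z : ℂ} (hz : 0 < z.re) :
    |arg z| = Real.arctan (|z.im| / z.re) := by
  rw [arg_eq_arctan_of_re_pos hz, Real.abs_arctan, abs_div, abs_of_pos hz]

lemma Matrix.det_rotationBlock_sub_smul_one {R : Type*} [CommRing R] (a b c z : R) :
    (Matrix.of ![![a, 0, b], ![0, c, 0], ![-b, 0, a]] - z • (1 : Matrix (Fin 3) (Fin 3) R)).det =
      (c - z) * ((a - z) ^ 2 + b ^ 2) := by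
  simp [Matrix.det_fin_three]
  ring

lemma Complex.eq_add_mul_I_or_eq_sub_mul_I_of_sq_add_sq_eq_zero {a b z : ℂ}
    (h : (a - z) ^ 2 + b ^ 2 = 0) : z = a + b * I ∨ z = a - b * I := by
  have hfactor : (a - z) ^ 2 + b ^ 2 = (z - (a + b * I)) * (z - (a - b * I)) := by
    ring_nf
    rw [I_sq]
    ring
  rw [hfactor] at h
  exact (mul_eq_zero.1 h).imp sub_eq_zero.1 sub_eq_zero.1

lemma arctan_le_abs_arg_of_det_eq_zero {b₂ k₁ k₂ : ℝ} (hk₁ : 0 < k₁) (hk₂ : k₂ < 0) {z : ℂ}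
    (hz : (Matrix.of ![![(k₁ : ℂ), 0, (b₂ : ℂ)], ![0, (k₂ : ℂ), 0], ![-(b₂ : ℂ), 0, (k₁ : ℂ)]] -
      z • 1).det = 0) :
    arctan (|b₂| / k₁) ≤ |z.arg| := by
  rw [Matrix.det_rotationBlock_sub_smul_one] at hz
  rcases mul_eq_zero.1 hz with hreal | hpair
  · rw [← sub_eq_zero.1 hreal, Complex.arg_ofReal_of_neg hk₂, abs_of_pos pi_pos]
    linarith [arctan_lt_pi_div_two (|b₂| / k₁), pi_pos]
  · rcases Complex.eq_add_mul_I_or_eq_sub_mul_I_of_sq_add_sq_eq_zero hpair with rfl | rfl <;>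
      simp [Complex.abs_arg_eq_arctan_of_re_pos, hk₁]

/-- If `k₁ > 0`, `k₂ < 0` and `q₀ = (2/π)·arctan(|b₂|/k₁)`, then `q₀ ∈ (0,1)`,
every eigenvalue of `J₀₂` satisfies `|arg λ| > qπ/2` for `0 < q < q₀`, and
`|arg λ| ≥ q₀π/2` at `q = q₀`. -/
theorem stmt_9 (b₂ k₁ k₂ : ℝ) (hb₂ : b₂ ≠ 0) (hk₁ : 0 < k₁) (hk₂ : k₂ < 0)
    (q₀ : ℝ) (hq₀ : q₀ = 2 / Real.pi * Real.arctan (|b₂| / k₁)) :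
    let J : Matrix (Fin 3) (Fin 3) ℂ :=
      Matrix.of ![![(k₁ : ℂ), 0, (b₂ : ℂ)], ![0, (k₂ : ℂ), 0], ![-(b₂ : ℂ), 0, (k₁ : ℂ)]]
    q₀ ∈ Set.Ioo (0 : ℝ) 1 ∧
    (∀ q : ℝ, 0 < q → q < q₀ → ∀ z : ℂ, (J - z • 1).det = 0 →
      |z.arg| > q * Real.pi / 2) ∧
    (∀ z : ℂ, (J - z • 1).det = 0 → |z.arg| ≥ q₀ * Real.pi / 2) := by
  intro J
  set a := arctan (|b₂| / k₁)
  have ha_pos : 0 < a := arctan_pos.2 (div_pos (abs_pos.2 hb₂) hk₁)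
  have ha_lt : a < π / 2 := arctan_lt_pi_div_two _
  have hq₀a : q₀ * π / 2 = a := by
    rw [hq₀]
    field_simp
  have hbound : ∀ z : ℂ, (J - z • 1).det = 0 → a ≤ |z.arg| := fun z hz ↦
    arctan_le_abs_arg_of_det_eq_zero hk₁ hk₂ hz
  refine ⟨⟨?_, ?_⟩, fun q _ hq z hz ↦ ?_, fun z hz ↦ hq₀a ▸ hbound z hz⟩
  · nlinarith [pi_pos]
  · nlinarith [pi_pos]
  · nlinarith [hbound z hz, pi_pos]
end

section
/- The characteristic polynomial of J₀₃, viewed as a complex 3×3 matrix, satisfies det(J₀₃ − λI) = −(λ − k₃)(λ² − k₃λ + b₁² + b₃²) for every λ ∈ ℂ; consequently the set of eigenvalues of J₀₃ is exactly {k₃, (k₃ + √Δ₀₃)/2, (k₃ − √Δ₀₃)/2}, where Δ₀₃ = k₃² − 4(b₁² + b₃²) and the square root is taken in ℂ. -/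
/-- Characteristic polynomial and eigenvalues of the Jacobian `J₀₃` of the controlled
type-3 fractional Stokes system at the zero equilibrium state, with
`Δ₀₃ = k₃² − 4(b₁² + b₃²)` and the square root taken in `ℂ`. -/
theorem stmt_14 (b₁ b₃ k₃ : ℝ) (hb₁ : b₁ ≠ 0) (hb₃ : b₃ ≠ 0) (hk₃ : k₃ ≠ 0) :
    let J : Matrix (Fin 3) (Fin 3) ℂ :=
      Matrix.of ![![(k₃ : ℂ), -(b₃ : ℂ), 0], ![(b₃ : ℂ), 0, -(b₁ : ℂ)],
        ![0, (b₁ : ℂ), (k₃ : ℂ)]]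
    let Δ : ℂ := (k₃ : ℂ) ^ 2 - 4 * ((b₁ : ℂ) ^ 2 + (b₃ : ℂ) ^ 2)
    (∀ z : ℂ, (J - z • 1).det =
      -(z - (k₃ : ℂ)) * (z ^ 2 - (k₃ : ℂ) * z + (b₁ : ℂ) ^ 2 + (b₃ : ℂ) ^ 2)) ∧
    {z : ℂ | (J - z • 1).det = 0} =
      {(k₃ : ℂ), ((k₃ : ℂ) + Δ ^ (1 / 2 : ℂ)) / 2, ((k₃ : ℂ) - Δ ^ (1 / 2 : ℂ)) / 2} := by
  intro J Δ
  have hdet : ∀ z : ℂ, (J - z • 1).det =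
      -(z - (k₃ : ℂ)) * (z ^ 2 - (k₃ : ℂ) * z + (b₁ : ℂ) ^ 2 + (b₃ : ℂ) ^ 2) := by
    intro z
    simp [J, Matrix.det_fin_three, Matrix.one_apply, Fin.ext_iff]
    ring
  refine ⟨hdet, ?_⟩
  have hs : (Δ ^ (1 / 2 : ℂ)) ^ 2 = Δ := by
    by_cases h : Δ = 0
    · rw [h, Complex.zero_cpow (by norm_num)]; ring
    · rw [sq, ← Complex.cpow_add _ _ h]
      norm_num
  set s := Δ ^ (1 / 2 : ℂ) with hs_def
  ext z
  simp only [Set.mem_setOf_eq, Set.mem_insert_iff, Set.mem_singleton_iff, hdet z]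
  have hfac : z ^ 2 - (k₃ : ℂ) * z + (b₁ : ℂ) ^ 2 + (b₃ : ℂ) ^ 2
      = (z - ((k₃ : ℂ) + s) / 2) * (z - ((k₃ : ℂ) - s) / 2) := by
    have : s ^ 2 = (k₃ : ℂ) ^ 2 - 4 * ((b₁ : ℂ) ^ 2 + (b₃ : ℂ) ^ 2) := hs
    linear_combination (1/4 : ℂ) * this
  rw [hfac]
  constructor
  · intro h
    rcases mul_eq_zero.1 h with h | h
    · left; linear_combination -h
    · rcases mul_eq_zero.1 h with h | h
      · right; left; linear_combination h
      · right; right; linear_combination h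
  · rintro (rfl | rfl | rfl)
    · simp
    · exact mul_eq_zero_of_right _ (mul_eq_zero_of_left (by ring) _)
    · exact mul_eq_zero_of_right _ (mul_eq_zero_of_right _ (by ring))
end

section
/- Set β₀₃ = √(b₁² + b₃²). If −2β₀₃ < k₃ < 0, then for every q ∈ (0,1) every eigenvalue λ ∈ ℂ of J₀₃ satisfies |arg λ| > qπ/2 (so the zero equilibrium state of the controlled type-3 fractional Stokes system is asymptotically stable for every order q ∈ (0,1)). -/
/-- If `−2β₀₃ < k₃ < 0` with `β₀₃ = √(b₁² + b₃²)`, then for every `q ∈ (0,1)` every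
eigenvalue `λ` of `J₀₃` satisfies `|arg λ| > qπ/2`. -/
theorem stmt_15 (b₁ b₃ k₃ : ℝ) (hb₁ : b₁ ≠ 0) (hb₃ : b₃ ≠ 0)
    (h₁ : -2 * Real.sqrt (b₁ ^ 2 + b₃ ^ 2) < k₃) (h₂ : k₃ < 0) :
    let J : Matrix (Fin 3) (Fin 3) ℂ :=
      Matrix.of ![![(k₃ : ℂ), -(b₃ : ℂ), 0], ![(b₃ : ℂ), 0, -(b₁ : ℂ)],
        ![0, (b₁ : ℂ), (k₃ : ℂ)]]
    ∀ q ∈ Set.Ioo (0 : ℝ) 1, ∀ z : ℂ, (J - z • 1).det = 0 →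
      |z.arg| > q * Real.pi / 2 := by
  intro J q hq z hdet
  have hs : (0:ℝ) < b₁ ^ 2 + b₃ ^ 2 := by positivity
  have hsq : Real.sqrt (b₁ ^ 2 + b₃ ^ 2) ^ 2 = b₁ ^ 2 + b₃ ^ 2 :=
    Real.sq_sqrt hs.le
  have hk2 : k₃ ^ 2 < 4 * (b₁ ^ 2 + b₃ ^ 2) := by nlinarith [Real.sqrt_nonneg (b₁ ^ 2 + b₃ ^ 2)]
  -- compute determinant
  have hdet' : ((k₃ : ℂ) - z) * (z ^ 2 - k₃ * z + (b₁ ^ 2 + b₃ ^ 2)) = 0 := by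
    rw [Matrix.det_fin_three] at hdet
    simp [J, Matrix.smul_apply, Matrix.one_apply] at hdet
    ring_nf at hdet ⊢
    linear_combination hdet
  have hre : z.re < 0 := by
    rcases mul_eq_zero.mp hdet' with h | h
    · have : z = (k₃ : ℂ) := by linear_combination -h
      rw [this]; simpa using h₂
    · have him : z.im * (2 * z.re - k₃) = 0 := by
        have := congrArg Complex.im h
        simp [Complex.ext_iff, pow_two, Complex.mul_re, Complex.mul_im] at this
        nlinarith [this]
      have hree : z.re ^ 2 - z.im ^ 2 - k₃ * z.re + (b₁ ^ 2 + b₃ ^ 2) = 0 := by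
        have := congrArg Complex.re h
        simp [pow_two, Complex.mul_re, Complex.mul_im] at this
        nlinarith [this]
      rcases mul_eq_zero.mp him with hy | hx
      · exfalso; nlinarith [hree, sq_nonneg (2 * z.re - k₃)]
      · have : z.re = k₃ / 2 := by linarith
        rw [this]; linarith
  have harg : Real.pi / 2 < |z.arg| := by
    by_contra hle
    push_neg at hle
    exact absurd (Complex.abs_arg_le_pi_div_two_iff.mp hle) (not_le.mpr hre)
  have hpi : 0 < Real.pi := Real.pi_pos
  calc q * Real.pi / 2 < 1 * Real.pi / 2 := by
        have := hq.2; have := hq.1; nlinarith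
    _ = Real.pi / 2 := by ring
    _ < |z.arg| := harg
end

section
/- Set β₀₃ = √(b₁² + b₃²). If k₃ ≤ −2β₀₃, then every eigenvalue of J₀₃ is real and negative; consequently for every q ∈ (0,1) every eigenvalue λ of J₀₃ satisfies |arg λ| = π > qπ/2 (so the zero equilibrium state of the controlled type-3 fractional Stokes system is asymptotically stable for every order q ∈ (0,1)). -/
/-- If `k₃ ≤ −2β₀₃` with `β₀₃ = √(b₁² + b₃²)`, then every eigenvalue of `J₀₃` is real
and negative, hence satisfies `|arg λ| = π > qπ/2` for every `q ∈ (0,1)`. -/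
theorem stmt_16 (b₁ b₃ k₃ : ℝ) (hb₁ : b₁ ≠ 0) (hb₃ : b₃ ≠ 0)
    (h : k₃ ≤ -2 * Real.sqrt (b₁ ^ 2 + b₃ ^ 2)) :
    let J : Matrix (Fin 3) (Fin 3) ℂ :=
      Matrix.of ![![(k₃ : ℂ), -(b₃ : ℂ), 0], ![(b₃ : ℂ), 0, -(b₁ : ℂ)],
        ![0, (b₁ : ℂ), (k₃ : ℂ)]]
    ∀ z : ℂ, (J - z • 1).det = 0 →
      (∃ r : ℝ, r < 0 ∧ z = (r : ℂ)) ∧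
      ∀ q ∈ Set.Ioo (0 : ℝ) 1, |z.arg| = Real.pi ∧ q * Real.pi / 2 < |z.arg| := by
  intro J z hz
  have hβ2 : (0:ℝ) < b₁ ^ 2 + b₃ ^ 2 := by positivity
  have hβpos : 0 < Real.sqrt (b₁ ^ 2 + b₃ ^ 2) := Real.sqrt_pos.mpr hβ2
  have hk : k₃ < 0 := lt_of_le_of_lt h (by linarith)
  have hdisc : 0 ≤ k₃ ^ 2 - 4 * (b₁ ^ 2 + b₃ ^ 2) := by
    have hβ : Real.sqrt (b₁ ^ 2 + b₃ ^ 2) ^ 2 = b₁ ^ 2 + b₃ ^ 2 :=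
      Real.sq_sqrt hβ2.le
    nlinarith [hβpos]
  set s : ℝ := Real.sqrt (k₃ ^ 2 - 4 * (b₁ ^ 2 + b₃ ^ 2)) with hs
  have hs2 : s ^ 2 = k₃ ^ 2 - 4 * (b₁ ^ 2 + b₃ ^ 2) := Real.sq_sqrt hdisc
  have hs0 : 0 ≤ s := Real.sqrt_nonneg _
  have hslt : s < -k₃ := by nlinarith
  set r1 : ℝ := (k₃ + s) / 2 with hr1
  set r2 : ℝ := (k₃ - s) / 2 with hr2
  have hr1neg : r1 < 0 := by rw [hr1]; linarith
  have hr2neg : r2 < 0 := by rw [hr2]; linarith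
  have h1 : (r1 : ℂ) + (r2 : ℂ) = (k₃ : ℂ) := by push_cast [hr1, hr2]; ring
  have h2 : (r1 : ℂ) * (r2 : ℂ) = (b₁ : ℂ) ^ 2 + (b₃ : ℂ) ^ 2 := by
    have hrr : r1 * r2 = b₁ ^ 2 + b₃ ^ 2 := by
      rw [hr1, hr2]; nlinarith [hs2]
    rw [← Complex.ofReal_mul, hrr]; push_cast; ring
  have hdet : (J - z • 1).det =
      ((k₃ : ℂ) - z) * ((z - (r1 : ℂ)) * (z - (r2 : ℂ))) := by
    simp only [J, Matrix.one_fin_three, Matrix.smul_of, Matrix.smul_cons,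
      smul_eq_mul, mul_one, mul_zero, Matrix.smul_empty, Matrix.det_fin_three,
      Matrix.sub_apply, Matrix.of_apply, Matrix.cons_val', Matrix.cons_val_zero,
      Matrix.cons_val_one, Matrix.head_cons, Matrix.empty_val',
      Matrix.cons_val_fin_one, Matrix.head_fin_const,
      Matrix.cons_val_two, Matrix.tail_cons]
    linear_combination (((k₃:ℂ) - z) * z) * h1 - ((k₃:ℂ) - z) * h2
  rw [hdet] at hz
  have hroot : ∃ r : ℝ, r < 0 ∧ z = (r : ℂ) := by
    rcases mul_eq_zero.mp hz with h0 | h0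
    · exact ⟨k₃, hk, (sub_eq_zero.mp h0).symm⟩
    · rcases mul_eq_zero.mp h0 with h0 | h0
      · exact ⟨r1, hr1neg, sub_eq_zero.mp h0⟩
      · exact ⟨r2, hr2neg, sub_eq_zero.mp h0⟩
  refine ⟨hroot, ?_⟩
  obtain ⟨r, hrneg, hzr⟩ := hroot
  intro q hq
  have harg : z.arg = Real.pi := by
    rw [hzr]; exact Complex.arg_ofReal_of_neg hrneg
  have habs : |z.arg| = Real.pi := by
    rw [harg]; exact abs_of_nonneg Real.pi_pos.le
  refine ⟨habs, ?_⟩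
  rw [habs]
  have := Real.pi_pos
  nlinarith [hq.1, hq.2]
end

section
/- If k₃ > 0, then k₃ is a real positive eigenvalue of J₀₃, and for every q ∈ (0,1) this eigenvalue satisfies |arg k₃| = 0 < qπ/2 (so the zero equilibrium state of the controlled type-3 fractional Stokes system is unstable for every order q ∈ (0,1)). -/
/-- If `k₃ > 0`, then `k₃` is a real positive eigenvalue of `J₀₃` and for every
`q ∈ (0,1)` it satisfies `|arg k₃| = 0 < qπ/2`. -/
theorem stmt_17 (b₁ b₃ k₃ : ℝ) (hb₁ : b₁ ≠ 0) (hb₃ : b₃ ≠ 0) (hk₃ : 0 < k₃) :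
    let J : Matrix (Fin 3) (Fin 3) ℂ :=
      Matrix.of ![![(k₃ : ℂ), -(b₃ : ℂ), 0], ![(b₃ : ℂ), 0, -(b₁ : ℂ)],
        ![0, (b₁ : ℂ), (k₃ : ℂ)]]
    (J - (k₃ : ℂ) • 1).det = 0 ∧
    (∀ q ∈ Set.Ioo (0 : ℝ) 1,
      |Complex.arg (k₃ : ℂ)| = 0 ∧ |Complex.arg (k₃ : ℂ)| < q * Real.pi / 2) := by
  intro J
  constructor
  · show Matrix.det _ = 0
    rw [Matrix.det_fin_three]
    simp [J, Matrix.smul_apply, Matrix.one_apply]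
  · intro q hq
    have harg : Complex.arg (k₃ : ℂ) = 0 := Complex.arg_ofReal_of_nonneg hk₃.le
    refine ⟨by simp [harg], ?_⟩
    rw [harg, abs_zero]
    have h1 := hq.1
    have := Real.pi_pos
    positivity
end

section
/- If k₄ < 0, then for every q ∈ (0,1) every eigenvalue λ ∈ ℂ of J₀₄ satisfies |arg λ| > qπ/2; if k₄ > 0, then k₄ is a real positive eigenvalue of J₀₄ satisfying |arg k₄| = 0 < qπ/2 for every q ∈ (0,1). (Hence the zero equilibrium state of the controlled type-4 fractional Stokes system is asymptotically stable for every order q ∈ (0,1) when k₄ < 0, and unstable for every order q ∈ (0,1) when k₄ > 0.) -/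
/-- If `k₄ < 0`, every eigenvalue of `J₀₄` satisfies `|arg λ| > qπ/2` for every
`q ∈ (0,1)`; if `k₄ > 0`, then `k₄` is a real positive eigenvalue of `J₀₄` with
`|arg k₄| = 0 < qπ/2` for every `q ∈ (0,1)`. -/
theorem stmt_19 (b₁ b₂ b₃ k₄ : ℝ) (hb₁ : b₁ ≠ 0) (hb₂ : b₂ ≠ 0) (hb₃ : b₃ ≠ 0)
    (hk₄ : k₄ ≠ 0) :
    let J : Matrix (Fin 3) (Fin 3) ℂ :=
      Matrix.of ![![(k₄ : ℂ), -(b₃ : ℂ), (b₂ : ℂ)], ![(b₃ : ℂ), (k₄ : ℂ), -(b₁ : ℂ)],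
        ![-(b₂ : ℂ), (b₁ : ℂ), (k₄ : ℂ)]]
    (k₄ < 0 → ∀ q ∈ Set.Ioo (0 : ℝ) 1, ∀ z : ℂ, (J - z • 1).det = 0 →
      |z.arg| > q * Real.pi / 2) ∧
    (0 < k₄ → (J - (k₄ : ℂ) • 1).det = 0 ∧
      ∀ q ∈ Set.Ioo (0 : ℝ) 1,
        |Complex.arg (k₄ : ℂ)| = 0 ∧ |Complex.arg (k₄ : ℂ)| < q * Real.pi / 2) := by
  intro J
  have hdet : ∀ z : ℂ, (J - z • 1).det =
      ((k₄ : ℂ) - z) * (((k₄ : ℂ) - z) ^ 2 + ((b₁ : ℂ) ^ 2 + (b₂ : ℂ) ^ 2 + (b₃ : ℂ) ^ 2)) := by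
    intro z
    simp [J, Matrix.det_fin_three, Matrix.smul_apply, Matrix.one_apply, Matrix.sub_apply]
    ring
  constructor
  · intro hk q hq z hz
    rw [hdet] at hz
    have hB : (0 : ℝ) < b₁ ^ 2 + b₂ ^ 2 + b₃ ^ 2 := by positivity
    -- show z.re = k₄
    have hre : z.re = k₄ := by
      rcases mul_eq_zero.mp hz with h | h
      · have : z = (k₄ : ℂ) := by linear_combination -h
        rw [this]; simp
      · set w : ℂ := (k₄ : ℂ) - z with hw
        have h2 : w ^ 2 = -((b₁ : ℝ) ^ 2 + b₂ ^ 2 + b₃ ^ 2 : ℝ) := by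
          push_cast
          linear_combination h
        have hre2 : w.re ^ 2 - w.im ^ 2 = -(b₁ ^ 2 + b₂ ^ 2 + b₃ ^ 2) := by
          have := congrArg Complex.re h2
          simpa [pow_two, Complex.mul_re] using this
        have him2 : w.re * w.im = 0 := by
          have := congrArg Complex.im h2
          simp [pow_two, Complex.mul_im] at this
          linarith
        have hwre : w.re = 0 := by
          rcases mul_eq_zero.mp him2 with h' | h'
          · exact h'
          · exfalso; rw [h'] at hre2; nlinarith
        have : (k₄ : ℂ).re - z.re = 0 := by
          simpa [hw, Complex.sub_re] using hwre
        simp at this; linarith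
    have hzre : z.re < 0 := by rw [hre]; exact hk
    have hz0 : z ≠ 0 := by
      intro h; rw [h] at hzre; simp at hzre
    have harg : Real.pi / 2 ≤ |z.arg| := by
      by_contra h
      push_neg at h
      rcases (Complex.abs_arg_lt_pi_div_two_iff).mp h with h' | h'
      · linarith
      · exact hz0 h'
    have : q * Real.pi / 2 < Real.pi / 2 := by
      have hpi := Real.pi_pos
      nlinarith [hq.1, hq.2]
    linarith
  · intro hk
    refine ⟨by rw [hdet]; ring, fun q hq => ?_⟩
    have h0 : Complex.arg (k₄ : ℂ) = 0 := by
      rw [Complex.arg_eq_zero_iff]; simp [hk.le]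
    have hpi := Real.pi_pos
    refine ⟨by rw [h0]; simp, ?_⟩
    rw [h0, abs_zero]
    nlinarith [hq.1]
end
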